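/- Length converse for capacity achieving ULDCs: for all integers N ≥ 2 and K ≥ 1, every universal locally decodable code (ULDC) with locality N, K source symbols, M coded symbols, and symbol rate R_s = L_w/L_x = C*(N,K) must satisfy M ≥ N^K. -/

import Mathlib

/-!
Write `W_{<k}` for the first `k` source symbols. Every coded symbol `X_m` lies in a decoding set
`S` of `W_k`, and recovering `W_k` from `X_S` removes exactly `L_w` bits from `H(X_S | W_{<k})`.
Hence `H(X_m | W_{<k+1}) + L_w ≤ ∑_{m' ∈ S} H(X_m' | W_{<k})`, and at the capacity rate the
chain of these inequalities starting from `H(X_m) = L_x` has no slack: for all `k` and `m`,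
`H(X_m | W_{<k}) = L_w (N⁻¹ + ⋯ + N^{-(K-k)})`, and `H(X_S | W_{<k})` is `N` times this value.
Consequently, given `W_{<k+1}` the symbols of `S` determine each other, while given `W_{<k}` no
two of them do. Grouping coded symbols by mutual determination given `W_{<k}`, every class for
`k + 1` therefore splits into at least `N` classes for `k`, so there are at least `N^K` classes
for `k = 0`, and at least as many coded symbols.
-/

open scoped BigOperators

noncomputable section

/-- A finite probability space: a finite type together with a probability mass function. -/
structure FinProbSpace where
  Ω : Type
  [fin : Fintype Ω]
  p : Ω → ℝ
  nonneg : ∀ ω, 0 ≤ p ω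
  sum_one : ∑ ω, p ω = 1

attribute [instance] FinProbSpace.fin

namespace FinProbSpace

variable (P : FinProbSpace)

/-- Probability that the random variable `X` takes the value `a`. -/
def prob {α : Type} [DecidableEq α] (X : P.Ω → α) (a : α) : ℝ :=
  ∑ ω, if X ω = a then P.p ω else 0

/-- Shannon entropy (in bits) of a finitely valued random variable. -/
def H {α : Type} [Fintype α] [DecidableEq α] (X : P.Ω → α) : ℝ :=
  ∑ a, -(P.prob X a * Real.logb 2 (P.prob X a))

/-- Conditional Shannon entropy `H(X | Y) = H(X, Y) - H(Y)` (in bits). -/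
def condH {α β : Type} [Fintype α] [DecidableEq α] [Fintype β] [DecidableEq β]
    (X : P.Ω → α) (Y : P.Ω → β) : ℝ :=
  P.H (fun ω => (X ω, Y ω)) - P.H Y

/-- The tuple random variable `(X_i)_{i ∈ ι}`. -/
def tuple {ι V : Type} (X : ι → P.Ω → V) : P.Ω → ι → V := fun ω i => X i ω

/-- Joint (mutual) independence of a finite family of random variables. -/
def iIndep {ι V : Type} [Fintype ι] [DecidableEq ι] [DecidableEq V] (X : ι → P.Ω → V) : Prop :=
  ∀ a : ι → V, P.prob (P.tuple X) a = ∏ i, P.prob (X i) (a i)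

/-- `X` and `Y` contain the same information about everything beyond `Z`:
`H(X | Y, Z) = H(Y | X, Z) = 0`. -/
def sameInfo {α β γ : Type} [Fintype α] [DecidableEq α] [Fintype β] [DecidableEq β]
    [Fintype γ] [DecidableEq γ] (X : P.Ω → α) (Y : P.Ω → β) (Z : P.Ω → γ) : Prop :=
  P.condH X (fun ω => (Y ω, Z ω)) = 0 ∧ P.condH Y (fun ω => (X ω, Z ω)) = 0

end FinProbSpace

/-- A locally decodable code with `K` source symbols of entropy `Lw`, `M` coded symbols of
entropy `Lx`, and locality `N`. -/
structure LDC (K N M : ℕ) (Lw Lx : ℝ) where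
  P : FinProbSpace
  V : Type
  [fV : Fintype V]
  [dV : DecidableEq V]
  V' : Type
  [fV' : Fintype V']
  [dV' : DecidableEq V']
  /-- the source symbols -/
  W : Fin K → P.Ω → V
  /-- the coded symbols -/
  X : Fin M → P.Ω → V'
  indep : P.iIndep W
  HW : ∀ k, P.H (W k) = Lw
  coded_fn : ∀ m, ∃ f : (Fin K → V) → V', ∀ ω, X m ω = f (fun k => W k ω)
  HX : ∀ m, P.H (X m) = Lx
  /-- the decoding supersets -/
  decSets : Fin K → Finset (Finset (Fin M))
  decSets_nonempty : ∀ k, (decSets k).Nonempty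
  decSets_card : ∀ k, ∀ s ∈ decSets k, s.card = N
  decodes : ∀ k, ∀ s ∈ decSets k,
    P.condH (W k) (P.tuple fun i : {x // x ∈ s} => X i.1) = 0

attribute [instance] LDC.fV LDC.dV LDC.fV' LDC.dV'

/-- A universal LDC: every coded symbol appears in some decoding set of every source symbol. -/
def LDC.IsUniversal {K N M : ℕ} {Lw Lx : ℝ} (C : LDC K N M Lw Lx) : Prop :=
  ∀ (m : Fin M) (k : Fin K), ∃ s ∈ C.decSets k, m ∈ s

/-- A perfectly smooth LDC: for each source symbol, every coded symbol lies in the same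
number of decoding sets. -/
def LDC.IsSmooth {K N M : ℕ} {Lw Lx : ℝ} (C : LDC K N M Lw Lx) : Prop :=
  ∀ (k : Fin K) (m m' : Fin M),
    ((C.decSets k).filter (fun s => m ∈ s)).card =
      ((C.decSets k).filter (fun s => m' ∈ s)).card

/-- `C*(N, K) = N (1 + 1/N + ⋯ + 1/N^{K-1})⁻¹`. -/
def Cstar (N K : ℕ) : ℝ := N / (∑ j ∈ Finset.range K, (1 / (N : ℝ)) ^ j)

/-- An `N`-query information retrieval scheme with `K` messages of entropy `Lw` and
answer sets of sizes `Mn n` with answers of entropy `Lx`. -/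
structure IRScheme (K N : ℕ) (Mn : Fin N → ℕ) (Lw Lx : ℝ) where
  P : FinProbSpace
  V : Type
  [fV : Fintype V]
  [dV : DecidableEq V]
  V' : Type
  [fV' : Fintype V']
  [dV' : DecidableEq V']
  /-- the messages -/
  W : Fin K → P.Ω → V
  /-- `A n m` is the `m`-th possible answer of database `n` -/
  A : (n : Fin N) → Fin (Mn n) → P.Ω → V'
  indep : P.iIndep W
  HW : ∀ k, P.H (W k) = Lw
  ans_fn : ∀ n m, ∃ f : (Fin K → V) → V', ∀ ω, A n m ω = f (fun k => W k ω)
  HA : ∀ n m, P.H (A n m) = Lx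
  /-- the decoding supersets: each decoding set consists of one answer index per database -/
  Q : Fin K → Finset ((n : Fin N) → Fin (Mn n))
  Q_nonempty : ∀ k, (Q k).Nonempty
  decodes : ∀ k, ∀ q ∈ Q k, P.condH (W k) (P.tuple fun n => A n (q n)) = 0

attribute [instance] IRScheme.fV IRScheme.dV IRScheme.fV' IRScheme.dV'

/-- A repudiative (RIR_max) scheme: every possible answer of every database appears in some
decoding set of every message. -/
def IRScheme.IsRIR {K N : ℕ} {Mn : Fin N → ℕ} {Lw Lx : ℝ} (C : IRScheme K N Mn Lw Lx) : Prop :=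
  ∀ (n : Fin N) (m : Fin (Mn n)) (k : Fin K), ∃ q ∈ C.Q k, q n = m

/-- A perfectly private (PIR_max) scheme: for each message there is a distribution on its
decoding sets such that the marginal distribution of the query to each database does not
depend on the message. -/
def IRScheme.IsPIR {K N : ℕ} {Mn : Fin N → ℕ} {Lw Lx : ℝ} (C : IRScheme K N Mn Lw Lx) : Prop :=
  ∃ μ : Fin K → ((n : Fin N) → Fin (Mn n)) → ℝ,
    (∀ k q, 0 ≤ μ k q) ∧ (∀ k, ∑ q ∈ C.Q k, μ k q = 1) ∧
    (∀ (k k' : Fin K) (n : Fin N) (m : Fin (Mn n)),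
      ∑ q ∈ (C.Q k).filter (fun q => q n = m), μ k q =
        ∑ q ∈ (C.Q k').filter (fun q => q n = m), μ k' q)

/-- `C_K(N) = (1 + 1/N + ⋯ + 1/N^{K-1})⁻¹`, the capacity of PIR. -/
def CK (N K : ℕ) : ℝ := (∑ j ∈ Finset.range K, (1 / (N : ℝ)) ^ j)⁻¹

open Finset

theorem Real.sum_mul_logb_le_of_sum_le {ι : Type*} (s : Finset ι) {b : ℝ} (hb : 1 < b)
    {p q : ι → ℝ} (hp : ∀ i ∈ s, 0 ≤ p i) (hq : ∀ i ∈ s, 0 ≤ q i)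
    (hpq : ∀ i ∈ s, p i ≠ 0 → q i ≠ 0) (hsum : ∑ i ∈ s, q i ≤ ∑ i ∈ s, p i) :
    ∑ i ∈ s, p i * Real.logb b (q i) ≤ ∑ i ∈ s, p i * Real.logb b (p i) := by
  have hlogb : 0 < Real.log b := Real.log_pos hb
  have pointwise : ∀ i ∈ s,
      p i * Real.logb b (q i) - p i * Real.logb b (p i) ≤ (q i - p i) / Real.log b := by
    intro i hi
    rcases (hp i hi).eq_or_lt with hp0 | hp0
    · rw [← hp0]
      simpa using div_nonneg (hq i hi) hlogb.le
    have hq0 : 0 < q i := (hq i hi).lt_of_ne (hpq i hi hp0.ne').symm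
    have key := Real.log_le_sub_one_of_pos (div_pos hq0 hp0)
    rw [Real.log_div hq0.ne' hp0.ne'] at key
    rw [Real.logb, Real.logb, ← mul_sub, ← sub_div, mul_div_assoc']
    gcongr
    calc p i * (Real.log (q i) - Real.log (p i)) ≤ p i * (q i / p i - 1) := by gcongr
      _ = q i - p i := by field_simp
  have := sum_le_sum pointwise
  rw [sum_sub_distrib, ← sum_div, sum_sub_distrib] at this
  have : (∑ i ∈ s, q i - ∑ i ∈ s, p i) / Real.log b ≤ 0 :=
    div_nonpos_of_nonpos_of_nonneg (by linarith) hlogb.le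
  linarith

theorem Fintype.sum_prod_mul_apply {ι V R : Type*} [Fintype ι] [DecidableEq ι] [Fintype V]
    [CommSemiring R] (f : ι → V → R) (hf : ∀ i, ∑ v, f i v = 1) (j : ι) (g : V → R) :
    ∑ a : ι → V, (∏ i, f i (a i)) * g (a j) = ∑ v, f j v * g v := by
  let F := Function.update f j fun v => f j v * g v
  have hF : ∀ a : ι → V, ∏ i, F i (a i) = (∏ i, f i (a i)) * g (a j) := by
    intro a
    have hrest : ∏ i ∈ univ.erase j, F i (a i) = ∏ i ∈ univ.erase j, f i (a i) :=
      Finset.prod_congr rfl fun i hi => by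
        simp only [F, Function.update_of_ne (ne_of_mem_erase hi)]
    rw [← mul_prod_erase univ (fun i => F i (a i)) (mem_univ j),
      ← mul_prod_erase univ (fun i => f i (a i)) (mem_univ j), hrest]
    simp only [F, Function.update_self]
    ring
  have hrest : ∏ i ∈ univ.erase j, ∑ v, F i v = 1 :=
    Finset.prod_eq_one fun i hi => by
      simp only [F, Function.update_of_ne (ne_of_mem_erase hi), hf i]
  simp only [← hF]
  rw [← Fintype.prod_sum, ← mul_prod_erase univ _ (mem_univ j), hrest]
  simp [F]

-- Prefixes of all lengths live in one type; `none` marks a coordinate that is forgotten.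
def maskOn {Ω ι V : Type} [DecidableEq ι] (X : ι → Ω → V) (s : Finset ι) (ω : Ω) (i : ι) :
    Option V :=
  if i ∈ s then some (X i ω) else none

lemma maskOn_insert {Ω ι V : Type} [DecidableEq ι] (X : ι → Ω → V) (s : Finset ι) (a : ι)
    (ω : Ω) : maskOn X (insert a s) ω = Function.update (maskOn X s ω) a (some (X a ω)) := by
  funext i
  by_cases h : i = a
  · subst h
    simp [maskOn]
  · simp [maskOn, h]

namespace FinProbSpace

variable (P : FinProbSpace) {α β γ : Type} [DecidableEq α] [DecidableEq β] [DecidableEq γ]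

lemma prob_nonneg (X : P.Ω → α) (a : α) : 0 ≤ P.prob X a :=
  sum_nonneg fun ω _ => by split_ifs <;> simp [P.nonneg ω]

lemma sum_prob [Fintype α] (X : P.Ω → α) : ∑ a, P.prob X a = 1 := by
  simp only [prob]
  rw [sum_comm, ← P.sum_one]
  simp

lemma nonempty_Ω : Nonempty P.Ω := by
  by_contra h
  have := P.sum_one
  simp [not_nonempty_iff.mp h] at this

lemma prob_map [Fintype α] (Z : P.Ω → α) (f : α → β) (b : β) :
    P.prob (fun ω => f (Z ω)) b = ∑ c, if f c = b then P.prob Z c else 0 := by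
  classical
  simp only [prob, ite_sum_zero]
  rw [sum_comm]
  refine sum_congr rfl fun ω _ => ?_
  rw [sum_eq_single (Z ω) (fun c _ hc => by simp [Ne.symm hc]) (by simp)]
  simp

lemma prob_le_prob_map [Fintype α] (Z : P.Ω → α) (f : α → β) (c : α) :
    P.prob Z c ≤ P.prob (fun ω => f (Z ω)) (f c) := by
  rw [P.prob_map Z f]
  calc P.prob Z c = if f c = f c then P.prob Z c else 0 := by simp
    _ ≤ _ := single_le_sum (f := fun b => if f b = f c then P.prob Z b else 0)
        (fun b _ => by split_ifs <;> simp [P.prob_nonneg]) (mem_univ c)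

lemma H_map_eq [Fintype α] [Fintype β] (Z : P.Ω → α) (f : α → β) :
    P.H (fun ω => f (Z ω)) =
      ∑ c, -(P.prob Z c * Real.logb 2 (P.prob (fun ω => f (Z ω)) (f c))) := by
  have fiber : ∀ b,
      -(P.prob (fun ω => f (Z ω)) b * Real.logb 2 (P.prob (fun ω => f (Z ω)) b)) =
        ∑ c, if f c = b then
          -(P.prob Z c * Real.logb 2 (P.prob (fun ω => f (Z ω)) (f c))) else 0 := by
    intro b
    conv_lhs => enter [1, 1]; rw [P.prob_map Z f b]
    rw [sum_mul, ← sum_neg_distrib]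
    refine sum_congr rfl fun c _ => ?_
    split_ifs with h <;> simp [h]
  simp only [H, fiber]
  rw [sum_comm]
  simp

lemma H_le_of_comp_eq [Fintype α] [Fintype β] {Z : P.Ω → α} {Y : P.Ω → β} (f : α → β)
    (hf : ∀ ω, f (Z ω) = Y ω) : P.H Y ≤ P.H Z := by
  obtain rfl : (fun ω => f (Z ω)) = Y := funext hf
  rw [P.H_map_eq]
  refine sum_le_sum fun c _ => ?_
  rcases (P.prob_nonneg Z c).eq_or_lt with h0 | h0
  · simp [← h0]
  · have := Real.logb_le_logb_of_le one_lt_two h0 (P.prob_le_prob_map Z f c)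
    nlinarith

lemma H_eq_of_comp_eq [Fintype α] [Fintype β] {Z : P.Ω → α} {Y : P.Ω → β} (f : α → β)
    (g : β → α) (hf : ∀ ω, f (Z ω) = Y ω) (hg : ∀ ω, g (Y ω) = Z ω) : P.H Y = P.H Z :=
  (P.H_le_of_comp_eq f hf).antisymm (P.H_le_of_comp_eq g hg)

lemma H_const [Fintype α] (a : α) : P.H (fun _ => a) = 0 := by
  have hprob : ∀ b, P.prob (fun _ => a) b = if a = b then 1 else 0 := by
    intro b
    split_ifs with h <;> simp [prob, h, P.sum_one]
  simp only [H, hprob]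
  refine sum_eq_zero fun b _ => ?_
  split_ifs <;> simp

lemma sum_prob_pair [Fintype α] (X : P.Ω → α) (Y : P.Ω → β) (b : β) :
    ∑ a, P.prob (fun ω => (X ω, Y ω)) (a, b) = P.prob Y b := by
  simp only [prob]
  rw [sum_comm]
  refine sum_congr rfl fun ω _ => ?_
  rw [sum_eq_single (X ω) (fun a _ ha => by simp [Ne.symm ha]) (by simp)]
  simp

lemma H_submodular [Fintype α] [Fintype β] [Fintype γ] (A : P.Ω → α) (B : P.Ω → β)
    (C : P.Ω → γ) :
    P.H (fun ω => (A ω, B ω, C ω)) + P.H C ≤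
      P.H (fun ω => (A ω, C ω)) + P.H (fun ω => (B ω, C ω)) := by
  let T : P.Ω → α × β × γ := fun ω => (A ω, B ω, C ω)
  let pAC := P.prob (fun ω => (A ω, C ω))
  let pBC := P.prob (fun ω => (B ω, C ω))
  let pC := P.prob C
  have hAC : P.H (fun ω => (A ω, C ω)) =
      ∑ x, -(P.prob T x * Real.logb 2 (pAC (x.1, x.2.2))) :=
    P.H_map_eq T fun x => (x.1, x.2.2)
  have hBC : P.H (fun ω => (B ω, C ω)) =
      ∑ x, -(P.prob T x * Real.logb 2 (pBC (x.2.1, x.2.2))) :=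
    P.H_map_eq T fun x => (x.2.1, x.2.2)
  have hC : P.H C = ∑ x, -(P.prob T x * Real.logb 2 (pC x.2.2)) :=
    P.H_map_eq T fun x => x.2.2
  -- Gibbs against `q = p(a,c) p(b,c) / p(c)`, whose total mass is `∑ c, p(c) = 1`
  let q : α × β × γ → ℝ := fun x => pAC (x.1, x.2.2) * pBC (x.2.1, x.2.2) / pC x.2.2
  have hsupp : ∀ x, P.prob T x ≠ 0 →
      0 < pAC (x.1, x.2.2) ∧ 0 < pBC (x.2.1, x.2.2) ∧ 0 < pC x.2.2 := fun x hx =>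
    have hx := (P.prob_nonneg T x).lt_of_ne' hx
    ⟨hx.trans_le (P.prob_le_prob_map T (fun y => (y.1, y.2.2)) x),
      hx.trans_le (P.prob_le_prob_map T (fun y => (y.2.1, y.2.2)) x),
      hx.trans_le (P.prob_le_prob_map T (fun y => y.2.2) x)⟩
  have hq_sum : ∑ x, q x = 1 :=
    calc ∑ x, q x = ∑ a, ∑ b, ∑ c, pAC (a, c) * pBC (b, c) / pC c := by
          simp only [q, Fintype.sum_prod_type]
      _ = ∑ c, ∑ a, ∑ b, pAC (a, c) * pBC (b, c) / pC c := by
          exact (sum_congr rfl fun _ _ => sum_comm).trans sum_comm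
      _ = ∑ c, (∑ a, pAC (a, c)) * (∑ b, pBC (b, c)) / pC c := by
          simp only [sum_mul_sum, sum_div]
      _ = ∑ c, pC c := by simp only [pAC, pBC, pC, P.sum_prob_pair, mul_self_div_self]
      _ = 1 := P.sum_prob C
  have gibbs := Real.sum_mul_logb_le_of_sum_le univ one_lt_two (p := P.prob T) (q := q)
    (fun x _ => P.prob_nonneg T x)
    (fun x _ => div_nonneg (mul_nonneg (P.prob_nonneg _ _) (P.prob_nonneg _ _))
      (P.prob_nonneg _ _))
    (fun x _ hx => by
      obtain ⟨h1, h2, h3⟩ := hsupp x hx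
      exact (div_pos (mul_pos h1 h2) h3).ne')
    (by rw [hq_sum, P.sum_prob])
  have hlog : ∀ x, P.prob T x * Real.logb 2 (q x) = P.prob T x * Real.logb 2 (pAC (x.1, x.2.2))
      + P.prob T x * Real.logb 2 (pBC (x.2.1, x.2.2)) - P.prob T x * Real.logb 2 (pC x.2.2) := by
    intro x
    by_cases hx : P.prob T x = 0
    · simp [hx]
    obtain ⟨h1, h2, h3⟩ := hsupp x hx
    rw [Real.logb_div (mul_pos h1 h2).ne' h3.ne', Real.logb_mul h1.ne' h2.ne']
    ring
  simp only [hlog, sum_add_distrib, sum_sub_distrib] at gibbs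
  have hT : P.H T = ∑ x, -(P.prob T x * Real.logb 2 (P.prob T x)) := rfl
  rw [show (fun ω => (A ω, B ω, C ω)) = T from rfl, hAC, hBC, hC, hT]
  simp only [sum_neg_distrib]
  linarith

lemma H_pair_le [Fintype α] [Fintype β] (A : P.Ω → α) (B : P.Ω → β) :
    P.H (fun ω => (A ω, B ω)) ≤ P.H A + P.H B := by
  have h := P.H_submodular A B fun _ => ()
  rwa [P.H_const, add_zero, P.H_eq_of_comp_eq (fun x => (x.1, x.2, ())) (fun x => (x.1, x.2.1))
    (Z := fun ω => (A ω, B ω)) (fun _ => rfl) (fun _ => rfl),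
    P.H_eq_of_comp_eq (fun a => (a, ())) Prod.fst (Z := A) (fun _ => rfl) (fun _ => rfl),
    P.H_eq_of_comp_eq (fun b => (b, ())) Prod.fst (Z := B) (fun _ => rfl) (fun _ => rfl)] at h

lemma H_tuple_of_iIndep {ι : Type} [Fintype ι] [DecidableEq ι] [Fintype α]
    (X : ι → P.Ω → α) (hX : P.iIndep X) : P.H (P.tuple X) = ∑ i, P.H (X i) := by
  have pointwise : ∀ a : ι → α,
      -(P.prob (P.tuple X) a * Real.logb 2 (P.prob (P.tuple X) a)) =
        ∑ j, (∏ i, P.prob (X i) (a i)) * -Real.logb 2 (P.prob (X j) (a j)) := by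
    intro a
    rw [hX a, ← mul_sum, sum_neg_distrib, mul_neg]
    by_cases h0 : ∃ i, P.prob (X i) (a i) = 0
    · obtain ⟨i, hi⟩ := h0
      rw [Finset.prod_eq_zero (mem_univ i) hi]
      simp
    · push Not at h0
      rw [Real.logb_prod _ _ fun i _ => h0 i]
  simp only [H, pointwise]
  rw [sum_comm]
  refine sum_congr rfl fun j _ => ?_
  rw [Fintype.sum_prod_mul_apply (fun i => P.prob (X i)) (fun i => P.sum_prob (X i)) j
    fun v => -Real.logb 2 (P.prob (X j) v)]
  simp only [mul_neg]

section condH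

variable [Fintype α] [Fintype β] [Fintype γ]

lemma condH_nonneg (X : P.Ω → α) (Y : P.Ω → β) : 0 ≤ P.condH X Y :=
  sub_nonneg.mpr (P.H_le_of_comp_eq Prod.snd fun _ => rfl)

lemma condH_eq_zero_of_comp_eq {X : P.Ω → α} {Y : P.Ω → β} (f : β → α)
    (hf : ∀ ω, f (Y ω) = X ω) : P.condH X Y = 0 :=
  sub_eq_zero.mpr (P.H_eq_of_comp_eq (fun b => (f b, b)) Prod.snd (fun ω => by rw [hf])
    fun _ => rfl)

lemma condH_le_of_comp_eq_left {X : P.Ω → α} {X' : P.Ω → β} (f : α → β)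
    (hf : ∀ ω, f (X ω) = X' ω) (Y : P.Ω → γ) : P.condH X' Y ≤ P.condH X Y :=
  sub_le_sub_right (P.H_le_of_comp_eq (fun p => (f p.1, p.2)) fun ω => by rw [hf]) _

lemma condH_congr_left {X : P.Ω → α} {X' : P.Ω → β} (f : α → β) (g : β → α)
    (hf : ∀ ω, f (X ω) = X' ω) (hg : ∀ ω, g (X' ω) = X ω) (Y : P.Ω → γ) :
    P.condH X' Y = P.condH X Y :=
  (P.condH_le_of_comp_eq_left f hf Y).antisymm (P.condH_le_of_comp_eq_left g hg Y)

lemma condH_le_of_comp_eq (X : P.Ω → α) {Y : P.Ω → β} {Y' : P.Ω → γ} (g : β → γ)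
    (hg : ∀ ω, g (Y ω) = Y' ω) : P.condH X Y ≤ P.condH X Y' := by
  have h := P.H_submodular X Y Y'
  rw [P.H_eq_of_comp_eq (fun p => (p.1, p.2, g p.2)) (fun p => (p.1, p.2.1))
      (Z := fun ω => (X ω, Y ω)) (fun ω => by rw [hg]) (fun _ => rfl),
    P.H_eq_of_comp_eq (fun b => (b, g b)) Prod.fst (Z := Y) (fun ω => by rw [hg])
      (fun _ => rfl)] at h
  simp only [condH]
  linarith

lemma condH_pair_eq {δ : Type} [Fintype δ] [DecidableEq δ] (X : P.Ω → α) (B : P.Ω → β)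
    (Y : P.Ω → δ) :
    P.condH (fun ω => (X ω, B ω)) Y = P.condH X (fun ω => (B ω, Y ω)) + P.condH B Y := by
  have h := P.H_eq_of_comp_eq (fun p => ((p.1, p.2.1), p.2.2)) (fun p => (p.1.1, p.1.2, p.2))
    (Z := fun ω => (X ω, B ω, Y ω)) (fun _ => rfl) (fun _ => rfl)
  simp only [condH, h]
  ring

lemma condH_pair_le {δ : Type} [Fintype δ] [DecidableEq δ] (X : P.Ω → α) (B : P.Ω → β)
    (Y : P.Ω → δ) :
    P.condH (fun ω => (X ω, B ω)) Y ≤ P.condH X Y + P.condH B Y := by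
  rw [P.condH_pair_eq]
  gcongr
  exact P.condH_le_of_comp_eq X Prod.snd fun _ => rfl

lemma condH_eq_zero_trans {δ : Type} [Fintype δ] [DecidableEq δ] {X : P.Ω → α}
    {Y : P.Ω → β} {Z : P.Ω → γ} {W : P.Ω → δ}
    (hXY : P.condH Y (fun ω => (X ω, W ω)) = 0)
    (hYZ : P.condH Z (fun ω => (Y ω, W ω)) = 0) : P.condH Z (fun ω => (X ω, W ω)) = 0 := by
  refine le_antisymm ?_ (P.condH_nonneg _ _)
  calc P.condH Z (fun ω => (X ω, W ω))
      ≤ P.condH (fun ω => (Z ω, Y ω)) (fun ω => (X ω, W ω)) :=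
        P.condH_le_of_comp_eq_left (X := fun ω => (Z ω, Y ω)) Prod.fst (fun _ => rfl) _
    _ = P.condH Z (fun ω => (Y ω, X ω, W ω)) := by rw [P.condH_pair_eq, hXY, add_zero]
    _ ≤ P.condH Z (fun ω => (Y ω, W ω)) :=
        P.condH_le_of_comp_eq Z (fun p => (p.1, p.2.2)) fun _ => rfl
    _ = 0 := hYZ

lemma condH_tuple_insert {ι : Type} [DecidableEq ι] (X : ι → P.Ω → α)
    (a : ι) (s : Finset ι) (Y : P.Ω → β) :
    P.condH (P.tuple fun i : (insert a s : Finset ι) => X i) Y =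
      P.condH (fun ω => (X a ω, P.tuple (fun i : s => X i) ω)) Y := by
  refine P.condH_congr_left (X := fun ω => (X a ω, P.tuple (fun i : s => X i) ω))
    (X' := P.tuple fun i : (insert a s : Finset ι) => X i)
    (fun q i => if hi : (i : ι) ∈ s then q.2 ⟨i, hi⟩ else q.1)
    (fun p => (p ⟨a, mem_insert_self a s⟩, fun i => p ⟨i, mem_insert_of_mem i.2⟩))
    (fun ω => funext fun i => ?_) (fun _ => rfl) Y
  by_cases hi : (i : ι) ∈ s
  · simp [tuple, hi]
  · have : (i : ι) = a := (mem_insert.mp i.2).resolve_right hi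
    simp [tuple, this]

lemma condH_tuple_le_sum {ι : Type} [DecidableEq ι] (X : ι → P.Ω → α)
    (s : Finset ι) (Y : P.Ω → β) :
    P.condH (P.tuple fun i : s => X i) Y ≤ ∑ i ∈ s, P.condH (X i) Y := by
  induction s using Finset.induction_on with
  | empty =>
    rw [P.condH_eq_zero_of_comp_eq (fun _ i => (notMem_empty _ i.2).elim)
      fun _ => funext fun i => (notMem_empty _ i.2).elim, sum_empty]
  | insert a s ha ih =>
    rw [P.condH_tuple_insert, sum_insert ha]
    exact (P.condH_pair_le _ _ _).trans (by gcongr)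

lemma condH_le_condH_tuple {ι : Type} [DecidableEq ι] (X : ι → P.Ω → α)
    {s : Finset ι} {i : ι} (hi : i ∈ s) (Y : P.Ω → β) :
    P.condH (X i) Y ≤ P.condH (P.tuple fun j : s => X j) Y :=
  P.condH_le_of_comp_eq_left (X := P.tuple fun j : s => X j) (fun p => p ⟨i, hi⟩)
    (fun _ => rfl) Y

lemma condH_const (X : P.Ω → α) (b : β) : P.condH X (fun _ => b) = P.H X := by
  rw [condH, P.H_const, sub_zero]
  exact P.H_eq_of_comp_eq (fun a => (a, b)) Prod.fst (fun _ => rfl) fun _ => rfl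

end condH

def sameInfoSetoid {ι : Type} [Fintype α] [Fintype β] (X : ι → P.Ω → α)
    (Y : P.Ω → β) : Setoid ι where
  r i j := P.sameInfo (X i) (X j) Y
  iseqv :=
    { refl := fun i =>
        have h := P.condH_eq_zero_of_comp_eq (X := X i) (Y := fun ω => (X i ω, Y ω)) Prod.fst
          fun _ => rfl
        ⟨h, h⟩
      symm := fun h => ⟨h.2, h.1⟩
      trans := fun h₁ h₂ =>
        ⟨P.condH_eq_zero_trans h₂.1 h₁.1, P.condH_eq_zero_trans h₁.2 h₂.2⟩ }

lemma sameInfoSetoid_mono {ι : Type} [Fintype α] [Fintype β] [Fintype γ]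
    (X : ι → P.Ω → α) {Y : P.Ω → β} {Y' : P.Ω → γ} (g : β → γ)
    (hg : ∀ ω, g (Y ω) = Y' ω) : P.sameInfoSetoid X Y' ≤ P.sameInfoSetoid X Y := by
  have mono : ∀ i j, P.condH (X i) (fun ω => (X j ω, Y' ω)) = 0 →
      P.condH (X i) (fun ω => (X j ω, Y ω)) = 0 := fun i j h =>
    le_antisymm (h ▸ P.condH_le_of_comp_eq _ (fun p => (p.1, g p.2)) fun ω => by rw [hg])
      (P.condH_nonneg _ _)
  exact fun i j h => ⟨mono i j h.1, mono j i h.2⟩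

section maskOn

variable {ι : Type} [Fintype ι] [DecidableEq ι] [Fintype α]

lemma H_maskOn_le_sum (X : ι → P.Ω → α) (s : Finset ι) :
    P.H (maskOn X s) ≤ ∑ i ∈ s, P.H (X i) := by
  induction s using Finset.induction_on with
  | empty =>
    have : maskOn X ∅ = fun _ _ => none := by
      funext ω i
      simp [maskOn]
    simp [this, P.H_const]
  | insert a s ha ih =>
    rw [sum_insert ha]
    calc P.H (maskOn X (insert a s)) ≤ P.H (fun ω => (X a ω, maskOn X s ω)) :=
          P.H_le_of_comp_eq (fun p => Function.update p.2 a (some p.1))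
            fun ω => (maskOn_insert X s a ω).symm
      _ ≤ P.H (X a) + P.H (maskOn X s) := P.H_pair_le _ _
      _ ≤ P.H (X a) + ∑ i ∈ s, P.H (X i) := by gcongr

lemma H_maskOn_of_iIndep (X : ι → P.Ω → α) (hX : P.iIndep X) (s : Finset ι) :
    P.H (maskOn X s) = ∑ i ∈ s, P.H (X i) := by
  obtain ⟨ω₀⟩ := P.nonempty_Ω
  refine (P.H_maskOn_le_sum X s).antisymm ?_
  have htuple : P.H (P.tuple X) ≤ P.H (fun ω => (maskOn X s ω, maskOn X sᶜ ω)) :=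
    P.H_le_of_comp_eq (fun p i => (p.1 i).getD ((p.2 i).getD (X i ω₀))) fun ω => by
      funext i
      by_cases h : i ∈ s <;> simp [maskOn, tuple, h]
  have := P.H_pair_le (maskOn X s) (maskOn X sᶜ)
  have := P.H_maskOn_le_sum X sᶜ
  rw [P.H_tuple_of_iIndep X hX, ← sum_add_sum_compl s] at htuple
  linarith

end maskOn

end FinProbSpace

theorem Setoid.mul_natCard_quotient_le {α : Type*} [Finite α] {s t : Setoid α} (hst : s ≤ t)
    {n : ℕ} (h : ∀ a, ∃ S : Finset α, #S = n ∧ (∀ b ∈ S, t b a) ∧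
      (S : Set α).Pairwise fun b c => ¬ s b c) :
    n * Nat.card (Quotient t) ≤ Nat.card (Quotient s) := by
  classical
  have := Fintype.ofFinite α
  have hsurj : Function.Surjective (Setoid.map_of_le hst) := by
    rintro ⟨a⟩
    exact ⟨Quotient.mk s a, rfl⟩
  rw [Nat.card_eq_fintype_card, Nat.card_eq_fintype_card, ← card_univ, ← card_univ,
    ← image_univ_of_surjective hsurj]
  refine mul_card_image_le_card _ _ fun y _ => ?_
  obtain ⟨a, rfl⟩ := Quotient.mk_surjective y
  obtain ⟨S, hcard, hSt, hSs⟩ := h a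
  calc n = #(S.image (Quotient.mk s)) := by
        rw [card_image_of_injOn fun b hb c hc hbc => ?_, hcard]
        by_contra hne
        exact hSs hb hc hne (Quotient.exact hbc)
    _ ≤ _ := card_le_card fun x hx => by
        obtain ⟨b, hb, rfl⟩ := mem_image.mp hx
        exact mem_filter.mpr ⟨mem_univ _, Quotient.sound (hSt b hb)⟩

theorem Setoid.pow_le_natCard_of_chain {α : Type*} [Finite α] [Nonempty α]
    (r : ℕ → Setoid α) {K n : ℕ} (hmono : ∀ k < K, r k ≤ r (k + 1))
    (hsplit : ∀ k < K, ∀ a, ∃ S : Finset α, #S = n ∧ (∀ b ∈ S, r (k + 1) b a) ∧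
      (S : Set α).Pairwise fun b c => ¬ r k b c) :
    n ^ K ≤ Nat.card α := by
  have key : ∀ d ≤ K, n ^ d ≤ Nat.card (Quotient (r (K - d))) := by
    intro d hd
    induction d with
    | zero =>
      have : Nonempty (Quotient (r (K - 0))) := .map (Quotient.mk _) ‹_›
      exact Nat.card_pos
    | succ d ih =>
      have hk : K - (d + 1) + 1 = K - d := by omega
      calc n ^ (d + 1) = n * n ^ d := pow_succ' n d
        _ ≤ n * Nat.card (Quotient (r (K - d))) := Nat.mul_le_mul_left n (ih (by omega))
        _ ≤ Nat.card (Quotient (r (K - (d + 1)))) := by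
          rw [← hk]
          exact Setoid.mul_natCard_quotient_le (hmono _ (by omega)) (hsplit _ (by omega))
  calc n ^ K ≤ Nat.card (Quotient (r 0)) := by simpa using key K le_rfl
    _ ≤ Nat.card α := Nat.card_le_card_of_surjective _ Quotient.mk_surjective

theorem eq_zero_of_le_sum {α : Type*} {K : ℕ} {e : ℕ → α → ℝ} (h0 : ∀ a, e 0 a ≤ 0)
    (hK : ∀ a, 0 ≤ e K a)
    (hstep : ∀ k < K, ∀ a, ∃ S : Finset α, a ∈ S ∧ e (k + 1) a ≤ ∑ b ∈ S, e k b) :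
    ∀ k ≤ K, ∀ a, e k a = 0 := by
  classical
  have upper : ∀ k ≤ K, ∀ a, e k a ≤ 0 := by
    intro k hk
    induction k with
    | zero => exact h0
    | succ k ih =>
      intro a
      obtain ⟨S, -, hS⟩ := hstep k hk a
      exact hS.trans (sum_nonpos fun b _ => ih (by omega) b)
  have lower : ∀ d k, k + d = K → ∀ a, 0 ≤ e k a := by
    intro d
    induction d with
    | zero =>
      rintro k rfl
      exact hK
    | succ d ih =>
      intro k hk a
      obtain ⟨S, haS, hS⟩ := hstep k (by omega) a
      rw [← add_sum_erase S _ haS] at hS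
      have := sum_nonpos fun b (_ : b ∈ S.erase a) => upper k (by omega) b
      linarith [ih (k + 1) (by omega) a]
  exact fun k hk a => (upper k hk a).antisymm (lower (K - k) k (by omega) a)

-- With `j` source symbols still unknown, each coded symbol of a capacity-achieving ULDC keeps
-- exactly `Lw * residualRate N j` bits of entropy.
def residualRate (N j : ℕ) : ℝ := ∑ i ∈ range j, ((N : ℝ)⁻¹) ^ (i + 1)

lemma residualRate_zero (N : ℕ) : residualRate N 0 = 0 := by simp [residualRate]

lemma residualRate_pos {N j : ℕ} (hN : 0 < N) (hj : 0 < j) : 0 < residualRate N j :=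
  sum_pos (fun _ _ => by positivity) (nonempty_range_iff.mpr hj.ne')

lemma mul_residualRate_eq_sum {N : ℕ} (hN : 0 < N) (j : ℕ) :
    N * residualRate N j = ∑ i ∈ range j, ((N : ℝ)⁻¹) ^ i := by
  rw [residualRate, mul_sum]
  refine sum_congr rfl fun i _ => ?_
  rw [pow_succ', ← mul_assoc, mul_inv_cancel₀ (by positivity), one_mul]

lemma mul_residualRate_succ {N : ℕ} (hN : 0 < N) (j : ℕ) :
    N * residualRate N (j + 1) = 1 + residualRate N j := by
  rw [mul_residualRate_eq_sum hN, sum_range_succ', residualRate, add_comm, pow_zero]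

lemma mul_mul_residualRate_sub {N K k : ℕ} (hN : 0 < N) (hk : k < K) (L : ℝ) :
    N * (L * residualRate N (K - k)) = L + L * residualRate N (K - (k + 1)) := by
  rw [show K - k = K - (k + 1) + 1 by omega, mul_left_comm, mul_residualRate_succ hN]
  ring

lemma eq_mul_residualRate_of_div_eq_Cstar {N K : ℕ} {Lw Lx : ℝ} (hN : 0 < N) (hK : 0 < K)
    (hLx : Lx ≠ 0) (h : Lw / Lx = Cstar N K) : Lx = Lw * residualRate N K := by
  have hr := (residualRate_pos hN hK).ne'
  simp only [Cstar, one_div, ← mul_residualRate_eq_sum hN] at h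
  rw [div_eq_div_iff hLx (by positivity)] at h
  field_simp at h
  linarith

namespace LDC

variable {K N M : ℕ} {Lw Lx : ℝ} (C : LDC K N M Lw Lx)

def srcPrefix (k : ℕ) : C.P.Ω → Fin K → Option C.V :=
  maskOn C.W (univ.filter fun i : Fin K => (i : ℕ) < k)

def codedOn (S : Finset (Fin M)) : C.P.Ω → S → C.V' :=
  C.P.tuple fun i : S => C.X i

def residual (k : ℕ) (m : Fin M) : ℝ :=
  C.P.condH (C.X m) (C.srcPrefix k)

def residualOn (k : ℕ) (S : Finset (Fin M)) : ℝ :=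
  C.P.condH (C.codedOn S) (C.srcPrefix k)

lemma srcPrefix_eq_restrict (k : ℕ) (ω : C.P.Ω) :
    C.srcPrefix k ω =
      fun i : Fin K => if (i : ℕ) < k then C.srcPrefix (k + 1) ω i else none := by
  funext i
  by_cases h : (i : ℕ) < k
  · simp [srcPrefix, maskOn, h, h.le]
  · simp [srcPrefix, maskOn, h]

lemma srcPrefix_succ {k : ℕ} (hk : k < K) (ω : C.P.Ω) :
    C.srcPrefix (k + 1) ω =
      Function.update (C.srcPrefix k ω) ⟨k, hk⟩ (some (C.W ⟨k, hk⟩ ω)) := by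
  rw [srcPrefix, srcPrefix, ← maskOn_insert]
  congr 1
  ext i
  simp only [mem_insert, mem_filter, mem_univ, true_and, Fin.ext_iff]
  omega

lemma H_srcPrefix {k : ℕ} (hk : k ≤ K) : C.P.H (C.srcPrefix k) = k * Lw := by
  rw [srcPrefix, C.P.H_maskOn_of_iIndep C.W C.indep, sum_congr rfl fun i _ => C.HW i, sum_const,
    Fin.card_filter_val_lt, min_eq_right hk, nsmul_eq_mul]

lemma residual_zero (m : Fin M) : C.residual 0 m = Lx := by
  have : C.srcPrefix 0 = fun _ _ => none := by
    funext ω i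
    simp [srcPrefix, maskOn]
  rw [residual, this, C.P.condH_const, C.HX]

lemma residualOn_succ {k : ℕ} (hk : k < K) {S : Finset (Fin M)}
    (hS : S ∈ C.decSets ⟨k, hk⟩) :
    C.residualOn (k + 1) S = C.residualOn k S - Lw := by
  -- `W_k` is decodable from `X_S`, so revealing it adds no joint entropy
  have hdecode : C.P.condH (C.W ⟨k, hk⟩) (fun ω => (C.codedOn S ω, C.srcPrefix k ω)) = 0 :=
    le_antisymm ((C.P.condH_le_of_comp_eq _ Prod.fst fun _ => rfl).trans_eq (C.decodes _ S hS))
      (C.P.condH_nonneg _ _)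
  have hjoint : C.P.H (fun ω => (C.codedOn S ω, C.srcPrefix (k + 1) ω)) =
      C.P.H (fun ω => (C.codedOn S ω, C.srcPrefix k ω)) := by
    refine le_antisymm ?_ (C.P.H_le_of_comp_eq
      (fun p => (p.1, fun i : Fin K => if (i : ℕ) < k then p.2 i else none))
      fun ω => by rw [C.srcPrefix_eq_restrict k ω])
    have := C.P.H_le_of_comp_eq (Y := fun ω => (C.codedOn S ω, C.srcPrefix (k + 1) ω))
      (Z := fun ω => (C.W ⟨k, hk⟩ ω, C.codedOn S ω, C.srcPrefix k ω))
      (fun p => (p.2.1, Function.update p.2.2 ⟨k, hk⟩ (some p.1)))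
      fun ω => by rw [C.srcPrefix_succ hk ω]
    simp only [FinProbSpace.condH] at hdecode
    linarith
  simp only [residualOn, FinProbSpace.condH, hjoint, C.H_srcPrefix hk.le,
    C.H_srcPrefix (Nat.succ_le_of_lt hk)]
  push_cast
  ring

lemma residual_succ_add_le_sum {k : ℕ} (hk : k < K) {S : Finset (Fin M)}
    (hS : S ∈ C.decSets ⟨k, hk⟩) {m : Fin M} (hm : m ∈ S) :
    C.residual (k + 1) m + Lw ≤ ∑ m' ∈ S, C.residual k m' := by
  have h1 : C.residual (k + 1) m ≤ C.residualOn (k + 1) S :=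
    C.P.condH_le_condH_tuple C.X hm _
  have h2 : C.residualOn k S ≤ ∑ m' ∈ S, C.residual k m' := C.P.condH_tuple_le_sum C.X S _
  rw [C.residualOn_succ hk hS] at h1
  linarith

lemma residual_eq (hK : 0 < K) (hN : 0 < N) (hLx : Lx ≠ 0) (hU : C.IsUniversal)
    (hcap : Lw / Lx = Cstar N K) {k : ℕ} (hk : k ≤ K) (m : Fin M) :
    C.residual k m = Lw * residualRate N (K - k) := by
  suffices ∀ k ≤ K, ∀ m, C.residual k m - Lw * residualRate N (K - k) = 0 from
    sub_eq_zero.mp (this k hk m)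
  refine eq_zero_of_le_sum (fun m => ?_) (fun m => ?_) fun k hk m => ?_
  · rw [C.residual_zero, Nat.sub_zero, ← eq_mul_residualRate_of_div_eq_Cstar hN hK hLx hcap,
      sub_self]
  · rw [Nat.sub_self, residualRate_zero, mul_zero, sub_zero]
    exact C.P.condH_nonneg _ _
  · obtain ⟨S, hS, hmS⟩ := hU m ⟨k, hk⟩
    refine ⟨S, hmS, ?_⟩
    have := C.residual_succ_add_le_sum hk hS hmS
    rw [sum_sub_distrib, sum_const, C.decSets_card _ S hS, nsmul_eq_mul,
      mul_mul_residualRate_sub hN hk]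
    linarith

lemma residualOn_eq (hK : 0 < K) (hN : 0 < N) (hLx : Lx ≠ 0) (hU : C.IsUniversal)
    (hcap : Lw / Lx = Cstar N K) {k : ℕ} (hk : k < K) {S : Finset (Fin M)}
    (hS : S ∈ C.decSets ⟨k, hk⟩) :
    C.residualOn k S = N * (Lw * residualRate N (K - k)) := by
  have hcard := C.decSets_card _ S hS
  obtain ⟨m, hm⟩ : S.Nonempty := card_pos.mp (hcard ▸ hN)
  refine le_antisymm ?_ ?_
  · calc C.residualOn k S ≤ ∑ m' ∈ S, C.residual k m' := C.P.condH_tuple_le_sum C.X S _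
      _ = N * (Lw * residualRate N (K - k)) := by
        rw [sum_congr rfl fun m' _ => C.residual_eq hK hN hLx hU hcap hk.le m', sum_const,
          hcard, nsmul_eq_mul]
  · have h1 : C.residual (k + 1) m ≤ C.residualOn (k + 1) S := C.P.condH_le_condH_tuple C.X hm _
    rw [C.residualOn_succ hk hS, C.residual_eq hK hN hLx hU hcap hk m] at h1
    rw [mul_mul_residualRate_sub hN hk]
    linarith

lemma sameInfo_of_mem_decSets (hK : 0 < K) (hN : 0 < N) (hLx : Lx ≠ 0) (hU : C.IsUniversal)
    (hcap : Lw / Lx = Cstar N K) {k : ℕ} (hk : k < K) {S : Finset (Fin M)}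
    (hS : S ∈ C.decSets ⟨k, hk⟩) {m m' : Fin M} (hm : m ∈ S) (hm' : m' ∈ S) :
    C.P.sameInfo (C.X m) (C.X m') (C.srcPrefix (k + 1)) := by
  have hS' : C.residualOn (k + 1) S = Lw * residualRate N (K - (k + 1)) := by
    rw [C.residualOn_succ hk hS, C.residualOn_eq hK hN hLx hU hcap hk hS,
      mul_mul_residualRate_sub hN hk]
    ring
  -- the pair already carries all of the residual entropy of `S`, which equals that of one symbol
  have determines : ∀ a b, a ∈ S → b ∈ S →
      C.P.condH (C.X a) (fun ω => (C.X b ω, C.srcPrefix (k + 1) ω)) = 0 := by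
    intro a b ha hb
    refine le_antisymm ?_ (C.P.condH_nonneg _ _)
    have hpair := C.P.condH_pair_eq (C.X a) (C.X b) (C.srcPrefix (k + 1))
    have hle : C.P.condH (fun ω => (C.X a ω, C.X b ω)) (C.srcPrefix (k + 1)) ≤
        C.residualOn (k + 1) S :=
      C.P.condH_le_of_comp_eq_left (X := C.codedOn S) (fun p => (p ⟨a, ha⟩, p ⟨b, hb⟩))
        (fun _ => rfl) _
    have hb' : C.residual (k + 1) b = Lw * residualRate N (K - (k + 1)) :=
      C.residual_eq hK hN hLx hU hcap hk b
    simp only [residual] at hb'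
    linarith
  exact ⟨determines m m' hm hm', determines m' m hm' hm⟩

lemma not_sameInfo_of_mem_decSets (hK : 0 < K) (hN : 0 < N) (hLw : 0 < Lw) (hLx : Lx ≠ 0)
    (hU : C.IsUniversal) (hcap : Lw / Lx = Cstar N K) {k : ℕ} (hk : k < K)
    {S : Finset (Fin M)} (hS : S ∈ C.decSets ⟨k, hk⟩) {m m' : Fin M} (hm : m ∈ S)
    (hm' : m' ∈ S) (hne : m ≠ m') :
    ¬ C.P.sameInfo (C.X m) (C.X m') (C.srcPrefix k) := by
  rintro ⟨hdet, -⟩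
  -- if `X m'` determined `X m`, the `N` symbols of `S` would only carry `N - 1` residuals
  have hsplit : C.residualOn k S ≤ ∑ m'' ∈ S.erase m, C.residual k m'' := by
    calc C.residualOn k S
        = C.P.condH (fun ω => (C.X m ω, C.codedOn (S.erase m) ω)) (C.srcPrefix k) := by
          have := C.P.condH_tuple_insert C.X m (S.erase m) (C.srcPrefix k)
          rwa [insert_erase hm] at this
      _ = C.P.condH (C.X m) (fun ω => (C.codedOn (S.erase m) ω, C.srcPrefix k ω)) +
          C.residualOn k (S.erase m) := C.P.condH_pair_eq _ _ _
      _ ≤ C.P.condH (C.X m) (fun ω => (C.X m' ω, C.srcPrefix k ω)) +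
          C.residualOn k (S.erase m) := by
          gcongr
          exact C.P.condH_le_of_comp_eq _
            (fun p => (p.1 ⟨m', mem_erase.mpr ⟨hne.symm, hm'⟩⟩, p.2)) fun _ => rfl
      _ ≤ ∑ m'' ∈ S.erase m, C.residual k m'' := by
          rw [hdet, zero_add]
          exact C.P.condH_tuple_le_sum C.X (S.erase m) _
  have hcard : ((S.erase m).card : ℝ) = N - 1 := by
    rw [card_erase_of_mem hm, C.decSets_card _ S hS, Nat.cast_sub (by omega), Nat.cast_one]
  rw [C.residualOn_eq hK hN hLx hU hcap hk hS,
    sum_congr rfl fun m'' _ => C.residual_eq hK hN hLx hU hcap hk.le m'', sum_const,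
    nsmul_eq_mul, hcard] at hsplit
  nlinarith [residualRate_pos hN (Nat.sub_pos_of_lt hk)]

end LDC

/-- Length converse for capacity achieving ULDCs: for `N ≥ 2`, `K ≥ 1`,
every ULDC with locality `N`, `K` source symbols, `M` coded symbols and symbol rate
`Lw / Lx = C*(N, K)` satisfies `M ≥ N^K`. -/
theorem uldc_length_converse (K N M : ℕ) (hK : 1 ≤ K) (hN : 2 ≤ N) (Lw Lx : ℝ)
    (hLw : 0 < Lw) (hLx : 0 < Lx) (C : LDC K N M Lw Lx) (hU : C.IsUniversal)
    (hcap : Lw / Lx = Cstar N K) : N ^ K ≤ M := by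
  have hN0 : 0 < N := by omega
  have : Nonempty (Fin M) := by
    obtain ⟨S, hS⟩ := C.decSets_nonempty ⟨0, hK⟩
    obtain ⟨m, -⟩ := card_pos.mp (C.decSets_card _ S hS ▸ hN0)
    exact ⟨m⟩
  simpa using Setoid.pow_le_natCard_of_chain (fun k => C.P.sameInfoSetoid C.X (C.srcPrefix k))
    (fun k _ => C.P.sameInfoSetoid_mono C.X (fun p i => if (i : ℕ) < k then p i else none)
      fun ω => (C.srcPrefix_eq_restrict k ω).symm)
    fun k hk m => by
      obtain ⟨S, hS, hmS⟩ := hU m ⟨k, hk⟩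
      exact ⟨S, C.decSets_card _ S hS,
        fun m' hm' => C.sameInfo_of_mem_decSets hK hN0 hLx.ne' hU hcap hk hS hm' hmS,
        fun a ha b hb hab =>
          C.not_sameInfo_of_mem_decSets hK hN0 hLw hLx.ne' hU hcap hk hS ha hb hab⟩
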